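/- arXiv:2512.10177 — 5 statements merged into one kernel-verified Lean document; each statement's English description precedes it below -/
import Mathlib

section
/- Let T be a tree of order n ≥ 2 and let T_s be the tree of order 2n − 1 obtained from T by subdividing each edge exactly once. Then B_n(T̄_s) is isomorphic to T, where T̄_s is the complement of T_s. In particular, every tree is isomorphic to a Bell coloring graph. -/
open SimpleGraph

variable {V : Type*} [Fintype V] [DecidableEq V]

/-- Delete the vertex `v` from its part: `P − v`. -/
def eraseVtx (P : Multiset (Finset V)) (v : V) : Multiset (Finset V) :=
  P.map (fun s => s.erase v)

/-- A stable `k`-partition of `G`: a multiset of exactly `k` independent sets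
(empty parts allowed) that are pairwise disjoint and whose union is `V(G)`.
(Pairwise disjointness together with covering is encoded by requiring that the
multiset sum of the parts is exactly the multiset of all vertices.) -/
def IsStablePartition (G : SimpleGraph V) (k : ℕ) (P : Multiset (Finset V)) : Prop :=
  Multiset.card P = k ∧ (P.map Finset.val).sum = (Finset.univ : Finset V).val ∧
    ∀ s ∈ P, ∀ a ∈ s, ∀ b ∈ s, ¬ G.Adj a b

/-- The Bell `k`-coloring graph of `G`. -/
def bellGraph (G : SimpleGraph V) (k : ℕ) :
    SimpleGraph {P : Multiset (Finset V) // IsStablePartition G k P} where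
  Adj P Q := P ≠ Q ∧ ∃ v : V, eraseVtx P.1 v = eraseVtx Q.1 v
  symm := by
    constructor
    rintro P Q ⟨hne, v, hv⟩
    exact ⟨hne.symm, v, hv.symm⟩
  loopless := by
    constructor
    rintro P ⟨hne, _⟩
    exact hne rfl

/-- The subdivision of a graph `T`: every edge `uv` is replaced by a new
vertex (the edge itself) joined to `u` and to `v`. -/
def subdivide {W : Type*} (T : SimpleGraph W) : SimpleGraph (W ⊕ T.edgeSet) where
  Adj x y :=
    match x, y with
    | Sum.inl v, Sum.inr e => v ∈ e.1
    | Sum.inr e, Sum.inl v => v ∈ e.1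
    | _, _ => False
  symm := by
    constructor
    rintro (a | a) (b | b) h
    · exact h.elim
    · exact h
    · exact h
    · exact h.elim
  loopless := by
    constructor
    rintro (a | a) h
    · exact h.elim
    · exact h.elim

/-!
A stable partition of the complement of `T_s` is a partition of `V(T) ⊔ E(T)` into cliques of
the triangle-free graph `T_s`, that is, into singletons and pairs `{v, e}` with `v ∈ e`. No part
contains two vertices of `T`, so with `n` parts each part contains exactly one vertex of `T`,
and the partition amounts to an injective choice of an endpoint for every edge. Exactly one
vertex `r` is never chosen, and then every other vertex must be matched with the edge towards `r`
(look at a counterexample closest to `r`). So the stable `n`-partitions are indexed by the roots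
`r ∈ V(T)`. Moving the subdivision vertex of an edge `uv` to the other endpoint re-roots the tree
from `u` to `v`; for non-adjacent roots two edges of the path between them change partners,
which no single move achieves.
-/

open Finset

def SameBlock {α : Type*} (P : Multiset (Finset α)) (x y : α) : Prop :=
  ∃ s ∈ P, x ∈ s ∧ y ∈ s

section Partitions

variable {α : Type*}

lemma sameBlock_eraseVtx_iff [DecidableEq α] {P : Multiset (Finset α)} {x y z : α}
    (hy : y ≠ x) (hz : z ≠ x) :
    SameBlock (eraseVtx P x) y z ↔ SameBlock P y z := by
  simp [SameBlock, eraseVtx, hy, hz]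

lemma eq_or_eq_of_eraseVtx_eq [DecidableEq α] {P Q : Multiset (Finset α)} {x y z : α}
    (h : eraseVtx P x = eraseVtx Q x) (hP : SameBlock P y z) (hQ : ¬ SameBlock Q y z) :
    x = y ∨ x = z := by
  by_contra! hx
  rw [← sameBlock_eraseVtx_iff hx.1.symm hx.2.symm, h,
    sameBlock_eraseVtx_iff hx.1.symm hx.2.symm] at hP
  exact hQ hP

lemma sum_map_val_eq_univ_iff [Fintype α] [DecidableEq α] {ι : Type*} [Fintype ι]
    (B : ι → Finset α) :
    ((univ.val.map B).map Finset.val).sum = univ.val ↔ ∀ a, ∃! i, a ∈ B i := by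
  have hcount (a : α) : ((univ.val.map B).map Finset.val).sum.count a = #{i | a ∈ B i} := by
    rw [Multiset.map_map, ← Finset.sum_eq_multiset_sum, Multiset.count_sum']
    simp [Multiset.count_eq_of_nodup (B _).nodup]
  simp only [Multiset.ext, hcount, Multiset.count_eq_one_of_mem univ.nodup (mem_univ _),
    Fintype.existsUnique_iff_card_one]

lemma IsStablePartition.isClique_of_compl [Fintype α] {G : SimpleGraph α} {k : ℕ}
    {P : Multiset (Finset α)} (hP : IsStablePartition Gᶜ k P) {s : Finset α} (hs : s ∈ P) :
    G.IsClique (s : Set α) :=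
  fun a ha b hb hab => by simpa [hab] using hP.2.2 s hs a ha b hb

end Partitions

namespace SimpleGraph.IsTree

variable {W : Type*} {T : SimpleGraph W} (hT : T.IsTree) {r u v w : W}

noncomputable def path (u v : W) : T.Walk u v :=
  (hT.existsUnique_path u v).exists.choose

lemma isPath_path (u v : W) : (hT.path u v).IsPath :=
  (hT.existsUnique_path u v).exists.choose_spec

lemma eq_path {p : T.Walk u v} (hp : p.IsPath) : p = hT.path u v :=
  (hT.existsUnique_path u v).unique hp (hT.isPath_path u v)

-- junk value `r` when `v = r`
noncomputable def parent (r v : W) : W :=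
  (hT.path v r).snd

noncomputable def depth (r v : W) : ℕ :=
  (hT.path v r).length

lemma adj_parent (hv : v ≠ r) : T.Adj v (hT.parent r v) :=
  Walk.adj_snd (Walk.not_nil_of_ne hv)

lemma parent_eq_snd {q : T.Walk v u} (hq : q.IsPath) (hr : r ∈ q.support) (hv : v ≠ r) :
    hT.parent r v = q.snd := by
  classical
  rw [parent, ← hT.eq_path (hq.takeUntil hr), Walk.snd_takeUntil hv.symm]

lemma parent_eq_of_adj (h : T.Adj v r) : hT.parent r v = r := by
  rw [hT.parent_eq_snd (q := .cons h .nil) (by simp [h.ne]) (by simp) h.ne, Walk.snd_cons]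

lemma depth_parent_add_one (hv : v ≠ r) : hT.depth r (hT.parent r v) + 1 = hT.depth r v := by
  have htail := hT.eq_path (hT.isPath_path v r).tail
  unfold depth parent
  rw [← htail, Walk.length_tail_add_one (Walk.not_nil_of_ne hv)]

lemma parent_parent_ne (hv : v ≠ r) (hp : hT.parent r v ≠ r) :
    hT.parent r (hT.parent r v) ≠ v := by
  intro h
  have h₁ := hT.depth_parent_add_one hv
  have h₂ := hT.depth_parent_add_one hp
  rw [h] at h₂
  omega

lemma parent_eq_or_parent_eq (huv : T.Adj u v) (hv : v ≠ r) :
    hT.parent r v = u ∨ (u ≠ r ∧ hT.parent r u = v) := by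
  by_cases hu : u ∈ (hT.path v r).support
  · -- the first step from `v` towards `r` is then also the first step towards `u`, which is `u`
    left
    rw [hT.parent_eq_snd (hT.isPath_path v r) (by simp) hv,
      ← hT.parent_eq_snd (hT.isPath_path v r) hu huv.ne', hT.parent_eq_of_adj huv.symm]
  · have hq := (hT.isPath_path v r).cons hu (h := huv)
    have hur : u ≠ r := by
      rintro rfl
      exact hu (Walk.end_mem_support _)
    exact Or.inr ⟨hur, by rw [hT.parent_eq_snd hq (by simp) hur, Walk.snd_cons]⟩

lemma parent_eq_parent_of_adj (huv : T.Adj u v) (hwu : w ≠ u) (hwv : w ≠ v) :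
    hT.parent u w = hT.parent v w := by
  by_cases hu : u ∈ (hT.path w v).support
  · rw [hT.parent_eq_snd (hT.isPath_path w v) hu hwu, parent]
  · have hq := (hT.isPath_path w v).concat hu huv.symm
    rw [hT.parent_eq_snd hq (by simp) hwu, hT.parent_eq_snd hq (by simp) hwv]

lemma exists_eq_parent_edge {e : Sym2 W} (he : e ∈ T.edgeSet) (r : W) :
    ∃ v ≠ r, e = s(v, hT.parent r v) := by
  induction e with
  | h a b =>
    rw [mem_edgeSet] at he
    by_cases hb : b = r
    · subst hb
      exact ⟨a, he.ne, by rw [hT.parent_eq_of_adj he]⟩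
    · rcases hT.parent_eq_or_parent_eq he hb with h | ⟨ha, h⟩
      · exact ⟨b, hb, by rw [h, Sym2.eq_swap]⟩
      · exact ⟨a, ha, by rw [h]⟩

lemma eq_of_parent_edge_eq (hv : v ≠ r) (hw : w ≠ r)
    (h : s(v, hT.parent r v) = s(w, hT.parent r w)) : v = w := by
  rcases Sym2.eq_iff.1 h with ⟨h, -⟩ | ⟨h₁, h₂⟩
  · exact h
  · exact (hT.parent_parent_ne hw (h₁ ▸ hv) (by rw [← h₁, h₂])).elim

lemma eq_of_injective_of_mem {g : T.edgeSet → W} (hg : Function.Injective g)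
    (hmem : ∀ e : T.edgeSet, g e ∈ (e : Sym2 W)) (hr : ∀ e, g e ≠ r) (hv : v ≠ r) :
    g ⟨s(v, hT.parent r v), hT.adj_parent hv⟩ = v := by
  induction hd : hT.depth r v using Nat.strong_induction_on generalizing v with
  | _ d ih =>
    rcases Sym2.mem_iff.1 (hmem ⟨s(v, hT.parent r v), hT.adj_parent hv⟩) with h | h
    · exact h
    · -- otherwise the parent of `v`, being closer to `r`, is also chosen on its own parent edge
      have hp : hT.parent r v ≠ r := h ▸ hr _
      have hgp := ih _ (by rw [← hd, ← hT.depth_parent_add_one hv]; omega) hp rfl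
      have hedge := congrArg Subtype.val (hg (h.trans hgp.symm))
      exact ((hT.adj_parent hv).ne (hT.eq_of_parent_edge_eq hv hp hedge)).elim

lemma apply_eq_iff_of_injective_of_mem {g : T.edgeSet → W} (hg : Function.Injective g)
    (hmem : ∀ e : T.edgeSet, g e ∈ (e : Sym2 W)) (hr : ∀ e, g e ≠ r)
    (e : T.edgeSet) (v : W) :
    g e = v ↔ v ≠ r ∧ (e : Sym2 W) = s(v, hT.parent r v) := by
  obtain ⟨a, ha, hea⟩ := hT.exists_eq_parent_edge e.2 r
  have hga : g e = a := by
    rw [← hT.eq_of_injective_of_mem hg hmem hr ha]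
    exact congrArg g (Subtype.ext hea)
  rw [hga, hea]
  exact ⟨by rintro rfl; exact ⟨ha, rfl⟩,
    fun ⟨hv, h⟩ => (hT.eq_of_parent_edge_eq hv ha h.symm).symm⟩

end SimpleGraph.IsTree

section Subdivision

variable {W : Type*} {T : SimpleGraph W}

@[simp]
lemma subdivide_adj_inl_inl {a b : W} : ¬ (subdivide T).Adj (.inl a) (.inl b) :=
  id

@[simp]
lemma subdivide_adj_inr_inr {e f : T.edgeSet} : ¬ (subdivide T).Adj (.inr e) (.inr f) :=
  id

@[simp]
lemma subdivide_adj_inl_inr {v : W} {e : T.edgeSet} :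
    (subdivide T).Adj (.inl v) (.inr e) ↔ v ∈ (e : Sym2 W) :=
  Iff.rfl

end Subdivision

lemma IsStablePartition.exists_eq_map_of_subdivide {T : SimpleGraph V} [DecidableRel T.Adj]
    {P : Multiset (Finset (V ⊕ T.edgeSet))}
    (hP : IsStablePartition (subdivide T)ᶜ (Fintype.card V) P) :
    ∃ B : V → Finset (V ⊕ T.edgeSet),
      P = univ.val.map B ∧ ∀ v a, .inl a ∈ B v ↔ a = v := by
  have hex (v : V) : ∃ s ∈ P, .inl v ∈ s := by
    have hv : Sum.inl v ∈ (P.map Finset.val).sum := hP.2.1 ▸ mem_univ _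
    simpa using Multiset.mem_join.1 hv
  choose B hBP hvB using hex
  have hBl (v a : V) (ha : .inl a ∈ B v) : a = v := by
    by_contra hav
    simpa using hP.isClique_of_compl (hBP v) ha (hvB v) (by simpa using hav)
  have hBinj : Function.Injective B := fun v w h => hBl w v (h ▸ hvB v)
  refine ⟨B, ?_, fun v a => ⟨hBl v a, by rintro rfl; exact hvB a⟩⟩
  refine (Multiset.eq_of_le_of_card_le ?_ (by simp [hP.1])).symm
  rw [Multiset.le_iff_subset (univ.nodup.map hBinj)]
  rintro _ hs
  obtain ⟨v, -, rfl⟩ := Multiset.mem_map.1 hs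
  exact hBP v

namespace SimpleGraph.IsTree

variable {T : SimpleGraph V} [DecidableRel T.Adj] (hT : T.IsTree) {r u v : V}

noncomputable def rootedBlock (r v : V) : Finset (V ⊕ T.edgeSet) :=
  ({v} : Finset V).disjSum {e | v ≠ r ∧ (e : Sym2 V) = s(v, hT.parent r v)}

noncomputable def rootedPartition (r : V) : Multiset (Finset (V ⊕ T.edgeSet)) :=
  univ.val.map (hT.rootedBlock r)

@[simp]
lemma inl_mem_rootedBlock {a : V} : .inl a ∈ hT.rootedBlock r v ↔ a = v := by
  simp [rootedBlock]

@[simp]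
lemma inr_mem_rootedBlock {e : T.edgeSet} :
    .inr e ∈ hT.rootedBlock r v ↔ v ≠ r ∧ (e : Sym2 V) = s(v, hT.parent r v) := by
  simp [rootedBlock]

lemma existsUnique_mem_rootedBlock (r : V) (x : V ⊕ T.edgeSet) :
    ∃! v, x ∈ hT.rootedBlock r v := by
  rcases x with a | e
  · simp
  · obtain ⟨a, ha, hea⟩ := hT.exists_eq_parent_edge e.2 r
    refine ⟨a, by simp [ha, hea], fun v (hv : .inr e ∈ hT.rootedBlock r v) => ?_⟩
    rw [inr_mem_rootedBlock, hea] at hv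
    exact hT.eq_of_parent_edge_eq hv.1 ha hv.2.symm

lemma isClique_rootedBlock (r v : V) : (subdivide T).IsClique (hT.rootedBlock r v : Set _) := by
  rintro (a | e) ha (b | f) hb hne <;>
    simp only [mem_coe, inl_mem_rootedBlock, inr_mem_rootedBlock] at ha hb
  · exact hne (by rw [ha, hb])
  · simp [ha, hb.2]
  · simp [adj_comm, hb, ha.2]
  · exact hne (congrArg _ (Subtype.ext (ha.2.trans hb.2.symm)))

lemma isStablePartition_rootedPartition (r : V) :
    IsStablePartition (subdivide T)ᶜ (Fintype.card V) (hT.rootedPartition r) := by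
  refine ⟨by simp [rootedPartition],
    (sum_map_val_eq_univ_iff _).2 (hT.existsUnique_mem_rootedBlock r), ?_⟩
  simp only [rootedPartition, Multiset.mem_map, Finset.mem_val, mem_univ, true_and]
  rintro _ ⟨v, rfl⟩ a ha b hb
  rw [compl_adj]
  exact fun h => h.2 (hT.isClique_rootedBlock r v ha hb h.1)

lemma sameBlock_rootedPartition_iff {a : V} {e : T.edgeSet} :
    SameBlock (hT.rootedPartition r) (.inl a) (.inr e) ↔
      a ≠ r ∧ (e : Sym2 V) = s(a, hT.parent r a) := by
  simp [SameBlock, rootedPartition]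

lemma rootedPartition_injective : Function.Injective hT.rootedPartition := by
  intro u v h
  by_contra huv
  have hsame := hT.sameBlock_rootedPartition_iff (r := u) (a := v)
    (e := ⟨s(v, hT.parent u v), hT.adj_parent (Ne.symm huv)⟩)
  rw [h, sameBlock_rootedPartition_iff] at hsame
  exact huv (by simpa using hsame : v = u).symm

lemma eraseVtx_rootedPartition_eq_of_adj (huv : T.Adj u v) :
    eraseVtx (hT.rootedPartition u) (.inr ⟨s(u, v), huv⟩) =
      eraseVtx (hT.rootedPartition v) (.inr ⟨s(u, v), huv⟩) := by
  simp only [eraseVtx, rootedPartition, Multiset.map_map]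
  refine Multiset.map_congr rfl fun w _ => ?_
  ext (a | e)
  · simp
  · simp only [Function.comp, mem_erase, inr_mem_rootedBlock, ne_eq, Sum.inr.injEq,
      Subtype.ext_iff]
    obtain rfl | hwu := eq_or_ne w u
    · simp +contextual [hT.parent_eq_of_adj huv]
    obtain rfl | hwv := eq_or_ne w v
    · simp +contextual [hT.parent_eq_of_adj huv.symm, Sym2.eq_swap]
    simp [hT.parent_eq_parent_of_adj huv hwu hwv, hwu, hwv]

lemma adj_of_eraseVtx_rootedPartition_eq (huv : u ≠ v) {x : V ⊕ T.edgeSet}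
    (h : eraseVtx (hT.rootedPartition u) x = eraseVtx (hT.rootedPartition v) x) : T.Adj u v := by
  by_contra hnadj
  set w := hT.parent u v
  have hvw : T.Adj v w := hT.adj_parent huv.symm
  have hwu : w ≠ u := fun h => hnadj (h ▸ hvw).symm
  have hpw : hT.parent u w ≠ v := hT.parent_parent_ne huv.symm hwu
  have hne : s(v, w) ≠ s(w, hT.parent u w) := by
    rw [Sym2.eq_swap, Ne, Sym2.congr_right]
    exact hpw.symm
  let e₁ : T.edgeSet := ⟨s(v, w), hvw⟩
  let e₂ : T.edgeSet := ⟨s(w, hT.parent u w), hT.adj_parent hwu⟩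
  have h₁ : x = .inl v ∨ x = .inr e₁ := eq_or_eq_of_eraseVtx_eq h
    ((hT.sameBlock_rootedPartition_iff).2 ⟨huv.symm, rfl⟩)
    (by simp [sameBlock_rootedPartition_iff])
  have h₂ : x = .inl w ∨ x = .inr e₁ := eq_or_eq_of_eraseVtx_eq h.symm
    (by simp [sameBlock_rootedPartition_iff, e₁, hvw.ne', hT.parent_eq_of_adj hvw.symm,
      Sym2.eq_swap])
    (by simp [sameBlock_rootedPartition_iff, e₁, hne])
  have h₃ : x = .inl w ∨ x = .inr e₂ := eq_or_eq_of_eraseVtx_eq h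
    (by simp [sameBlock_rootedPartition_iff, e₂, hwu])
    (by simp [sameBlock_rootedPartition_iff, e₂, hT.parent_eq_of_adj hvw.symm, hvw.ne', hpw])
  rcases h₂ with rfl | rfl
  · simp [hvw.ne'] at h₁
  · simp only [Sum.inr.injEq, reduceCtorEq, false_or] at h₃
    exact hne (congrArg Subtype.val h₃)

lemma exists_eq_rootedPartition {P : Multiset (Finset (V ⊕ T.edgeSet))}
    (hP : IsStablePartition (subdivide T)ᶜ (Fintype.card V) P) :
    ∃ r, P = hT.rootedPartition r := by
  obtain ⟨B, rfl, hBl⟩ := hP.exists_eq_map_of_subdivide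
  have hcover := (sum_map_val_eq_univ_iff B).1 hP.2.1
  have hclique (v : V) := hP.isClique_of_compl (Multiset.mem_map_of_mem B (mem_univ v))
  choose g hg using fun e : T.edgeSet => (hcover (.inr e)).exists
  have hg_iff (e : T.edgeSet) (v : V) : .inr e ∈ B v ↔ g e = v :=
    ⟨fun h => (hcover _).unique (hg e) h, by rintro rfl; exact hg e⟩
  have hmem (e : T.edgeSet) : g e ∈ (e : Sym2 V) := by
    simpa using hclique (g e) ((hBl _ _).2 rfl) (hg e) (by simp)
  have hginj : Function.Injective g := by
    intro e f hef
    by_contra hne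
    exact subdivide_adj_inr_inr (hclique (g e) (hg e) (hef ▸ hg f) (by simpa using hne))
  obtain ⟨r, hr⟩ : ∃ r, ∀ e, g e ≠ r := by
    by_contra! hsurj
    have hcard := hT.card_edgeFinset
    rw [edgeFinset_card] at hcard
    have := Fintype.card_le_of_surjective g hsurj
    omega
  refine ⟨r, Multiset.map_congr rfl fun v _ => ?_⟩
  ext (a | e)
  · simp [hBl]
  · rw [hg_iff, inr_mem_rootedBlock, hT.apply_eq_iff_of_injective_of_mem hginj hmem hr]

end SimpleGraph.IsTree

theorem tree_subdivision_bell_general {V : Type*} [Fintype V] [DecidableEq V]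
    (T : SimpleGraph V) [DecidableRel T.Adj] (hT : T.IsTree)
    (n : ℕ) (hn : Fintype.card V = n) :
    Nonempty (bellGraph (subdivide T)ᶜ n ≃g T) := by
  subst hn
  let f (r : V) : {P // IsStablePartition (subdivide T)ᶜ (Fintype.card V) P} :=
    ⟨hT.rootedPartition r, hT.isStablePartition_rootedPartition r⟩
  have hf : Function.Bijective f := by
    refine ⟨fun u v h => hT.rootedPartition_injective (congrArg Subtype.val h), ?_⟩
    rintro ⟨P, hP⟩
    obtain ⟨r, rfl⟩ := hT.exists_eq_rootedPartition hP
    exact ⟨r, rfl⟩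
  refine ⟨(⟨Equiv.ofBijective f hf, fun {u v} => ?_⟩ : T ≃g bellGraph _ _).symm⟩
  change (bellGraph _ _).Adj (f u) (f v) ↔ T.Adj u v
  constructor
  · rintro ⟨hne, x, hx⟩
    exact hT.adj_of_eraseVtx_rootedPartition_eq (fun h => hne (congrArg f h)) hx
  · intro huv
    exact ⟨hf.1.ne huv.ne, .inr ⟨s(u, v), huv⟩, hT.eraseVtx_rootedPartition_eq_of_adj huv⟩

/-- **Trees are Bell coloring graphs.** If `T` is a tree of order `n ≥ 2` and
`T_s` is the tree obtained from `T` by subdividing every edge once, then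
`B_n(T̄_s) ≅ T`. -/
theorem tree_subdivision_bell {V : Type*} [Fintype V] [DecidableEq V]
    (T : SimpleGraph V) [DecidableRel T.Adj] (hT : T.IsTree)
    (n : ℕ) (hn : Fintype.card V = n) (h2 : 2 ≤ n) :
    Nonempty (bellGraph (subdivide T)ᶜ n ≃g T) :=
  tree_subdivision_bell_general T hT n hn
end

section
/- Let T be a tree of order n. Then the maximum degree of the Bell 3-coloring graph B_3(T) is at most n. -/
open SimpleGraph

variable {V : Type*} [Fintype V] [DecidableEq V]

/-!
Deleting `v` from a stable `3`-partition `P` leaves three parts, and every stable partition `Q`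
with `Q − v = P − v` arises by putting `v` back into one of them. If `v` has a neighbour `w`, the
part containing `w` is forbidden, so apart from `P` there is at most one such `Q`; if `v` has no
neighbour, connectedness forces `V = {v}` and all three parts are empty. Hence choosing for each
neighbour `Q` of `P` in `B₃(T)` a vertex `v` with `Q − v = P − v` is injective.
-/

lemma Multiset.count_sum_map_val {α : Type*} [DecidableEq α] (R : Multiset (Finset α)) (a : α) :
    (R.map Finset.val).sum.count a = Multiset.card (R.filter (a ∈ ·)) := by
  induction R using Multiset.induction with
  | empty => simp
  | cons s R ih =>
    by_cases ha : a ∈ s <;>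
      simp [ih, ha, Multiset.count_eq_one_of_mem s.nodup, add_comm]

lemma Multiset.three_le_card_of_mem {α : Type*} [DecidableEq α] {M : Multiset α} {a b c : α}
    (ha : a ∈ M) (hb : b ∈ M) (hc : c ∈ M) (hab : a ≠ b) (hac : a ≠ c) (hbc : b ≠ c) :
    3 ≤ Multiset.card M :=
  calc 3 = ({a, b, c} : Finset α).card := by simp [Finset.card_insert_of_notMem, *]
    _ ≤ M.toFinset.card := Finset.card_le_card (by simp [Finset.insert_subset_iff, *])
    _ ≤ Multiset.card M := Multiset.toFinset_card_le M

lemma card_filter_mem_eraseVtx {α : Type*} [DecidableEq α] (P : Multiset (Finset α)) {a v : α}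
    (h : a ≠ v) :
    Multiset.card ((eraseVtx P v).filter (a ∈ ·)) = Multiset.card (P.filter (a ∈ ·)) := by
  rw [eraseVtx, Multiset.filter_map, Multiset.card_map]
  congr 1
  exact Multiset.filter_congr fun s _ => by simp [h]

namespace IsStablePartition

variable {G : SimpleGraph V} {k : ℕ} {P Q : Multiset (Finset V)}

lemma card_filter_mem (hP : IsStablePartition G k P) (a : V) :
    Multiset.card (P.filter (a ∈ ·)) = 1 := by
  rw [← Multiset.count_sum_map_val, hP.2.1]
  exact Multiset.count_eq_one_of_mem Finset.univ.nodup (Finset.mem_univ a)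

lemma exists_eq_cons_insert (hQ : IsStablePartition G k Q) (v : V) :
    ∃ s ∈ eraseVtx Q v, Q = insert v s ::ₘ (eraseVtx Q v).erase s := by
  obtain ⟨t, ht⟩ := Multiset.card_eq_one.mp (hQ.card_filter_mem v)
  obtain ⟨htQ, hvt⟩ : t ∈ Q ∧ v ∈ t := Multiset.mem_filter.mp (ht ▸ Multiset.mem_singleton_self t)
  have hQ' : Q = t ::ₘ Q.erase t := (Multiset.cons_erase htQ).symm
  have hrest : (Q.erase t).filter (v ∈ ·) = 0 := by
    rw [hQ', Multiset.filter_cons_of_pos (p := (v ∈ ·)) _ hvt] at ht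
    exact (Multiset.cons_inj_right t).mp ht
  have hE : eraseVtx Q v = t.erase v ::ₘ Q.erase t := by
    rw [hQ', eraseVtx, Multiset.map_cons, Multiset.erase_cons_head]
    congr 1
    refine (Multiset.map_congr rfl fun s hs => Finset.erase_eq_of_notMem fun hv => ?_).trans
      (Multiset.map_id _)
    simpa [hrest] using (Multiset.mem_filter (p := (v ∈ ·))).mpr ⟨hs, hv⟩
  refine ⟨t.erase v, by simp [hE], ?_⟩
  rw [hE, Multiset.erase_cons_head, Finset.insert_erase hvt]
  exact hQ'

lemma notMem_of_adj {v w : V} {s : Finset V} {R : Multiset (Finset V)}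
    (hQ : IsStablePartition G k (insert v s ::ₘ R)) (hvw : G.Adj v w) : w ∉ s := fun hw =>
  hQ.2.2 _ (Multiset.mem_cons_self _ _) v (Finset.mem_insert_self v s) w
    (Finset.mem_insert_of_mem hw) hvw

end IsStablePartition

section ThreePartitions

variable {G : SimpleGraph V} {k : ℕ} {v : V} {P Q₁ Q₂ : Multiset (Finset V)}

lemma eq_of_eraseVtx_eq_of_adj {w : V} (hvw : G.Adj v w) (hP : IsStablePartition G 3 P)
    (hQ₁ : IsStablePartition G 3 Q₁) (hQ₂ : IsStablePartition G 3 Q₂)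
    (h₁ : eraseVtx Q₁ v = eraseVtx P v) (h₂ : eraseVtx Q₂ v = eraseVtx P v)
    (hne₁ : Q₁ ≠ P) (hne₂ : Q₂ ≠ P) : Q₁ = Q₂ := by
  obtain ⟨s, hs, hPs⟩ := hP.exists_eq_cons_insert v
  obtain ⟨s₁, hs₁, hQs₁⟩ := hQ₁.exists_eq_cons_insert v
  obtain ⟨s₂, hs₂, hQs₂⟩ := hQ₂.exists_eq_cons_insert v
  rw [h₁] at hs₁ hQs₁
  rw [h₂] at hs₂ hQs₂
  set R := eraseVtx P v
  have hfree : Multiset.card (R.filter (w ∉ ·)) = 2 := by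
    have hR : Multiset.card R = 3 := (Multiset.card_map _ _).trans hP.1
    have hw : Multiset.card (R.filter (w ∈ ·)) = 1 := by
      rw [card_filter_mem_eraseVtx P hvw.ne.symm, hP.card_filter_mem w]
    rw [← Multiset.filter_add_not (w ∈ ·) R, Multiset.card_add, hw] at hR
    omega
  have mem_free {t : Finset V} (ht : t ∈ R)
      (hQ : IsStablePartition G 3 (insert v t ::ₘ R.erase t)) : t ∈ R.filter (w ∉ ·) :=
    Multiset.mem_filter.mpr ⟨ht, hQ.notMem_of_adj hvw⟩
  by_contra hne
  have := Multiset.three_le_card_of_mem (mem_free hs (hPs ▸ hP)) (mem_free hs₁ (hQs₁ ▸ hQ₁))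
    (mem_free hs₂ (hQs₂ ▸ hQ₂)) (fun h => hne₁ (by rw [hQs₁, hPs, h]))
    (fun h => hne₂ (by rw [hQs₂, hPs, h])) (fun h => hne (by rw [hQs₁, hQs₂, h]))
  omega

lemma eq_of_eraseVtx_eq_of_subsingleton [Subsingleton V] (hQ₁ : IsStablePartition G k Q₁)
    (hQ₂ : IsStablePartition G k Q₂) (h : eraseVtx Q₁ v = eraseVtx Q₂ v) : Q₁ = Q₂ := by
  have hempty (Q : Multiset (Finset V)) : ∀ s ∈ eraseVtx Q v, s = ∅ := by
    simp only [eraseVtx, Multiset.mem_map]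
    rintro _ ⟨t, -, rfl⟩
    exact Finset.eq_empty_of_forall_notMem fun u hu =>
      (Finset.mem_erase.mp hu).1 (Subsingleton.elim u v)
  obtain ⟨s₁, hs₁, hQs₁⟩ := hQ₁.exists_eq_cons_insert v
  obtain ⟨s₂, hs₂, hQs₂⟩ := hQ₂.exists_eq_cons_insert v
  rw [hQs₁, hQs₂, hempty Q₁ s₁ hs₁, hempty Q₂ s₂ hs₂, h]

lemma eq_of_eraseVtx_eq (hG : G.Preconnected) (hP : IsStablePartition G 3 P)
    (hQ₁ : IsStablePartition G 3 Q₁) (hQ₂ : IsStablePartition G 3 Q₂)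
    (h₁ : eraseVtx Q₁ v = eraseVtx P v) (h₂ : eraseVtx Q₂ v = eraseVtx P v)
    (hne₁ : Q₁ ≠ P) (hne₂ : Q₂ ≠ P) : Q₁ = Q₂ := by
  rcases subsingleton_or_nontrivial V with _ | _
  · exact eq_of_eraseVtx_eq_of_subsingleton hQ₁ hQ₂ (h₁.trans h₂.symm)
  · obtain ⟨w, hvw⟩ := hG.exists_adj_of_nontrivial v
    exact eq_of_eraseVtx_eq_of_adj hvw hP hQ₁ hQ₂ h₁ h₂ hne₁ hne₂

theorem bellGraph_three_neighborSet_finite_and_ncard_le (hG : G.Preconnected)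
    (P : {P : Multiset (Finset V) // IsStablePartition G 3 P}) :
    ((bellGraph G 3).neighborSet P).Finite ∧
      ((bellGraph G 3).neighborSet P).ncard ≤ Fintype.card V := by
  choose f hf using fun Q : (bellGraph G 3).neighborSet P => Q.2.2
  have hinj : Function.Injective f := by
    intro Q₁ Q₂ h
    have hne (Q : (bellGraph G 3).neighborSet P) : Q.1.1 ≠ P.1 := fun he =>
      Q.2.1 (Subtype.ext he.symm)
    refine Subtype.ext (Subtype.ext (eq_of_eraseVtx_eq hG P.2 Q₁.1.2 Q₂.1.2 (hf Q₁).symm ?_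
      (hne Q₁) (hne Q₂)))
    rw [h]
    exact (hf Q₂).symm
  refine ⟨Set.finite_coe_iff.mp (Finite.of_injective f hinj), ?_⟩
  rw [← Nat.card_coe_set_eq, ← Nat.card_eq_fintype_card]
  exact Nat.card_le_card_of_injective f hinj

end ThreePartitions

/-- **Maximum degree bound.** For a tree `T` of order `n`, every vertex of the
Bell `3`-coloring graph `B₃(T)` has (finite) degree at most `n`. -/
theorem bell3_tree_maxDegree_le (T : SimpleGraph V) (hT : T.IsTree)
    (n : ℕ) (hn : Fintype.card V = n)
    (P : {P : Multiset (Finset V) // IsStablePartition T 3 P}) :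
    ((bellGraph T 3).neighborSet P).Finite ∧
      ((bellGraph T 3).neighborSet P).ncard ≤ n :=
  hn ▸ bellGraph_three_neighborSet_finite_and_ncard_le hT.connected.preconnected P
end

section
/- Let T be a tree of order n and let P be a stable 3-partition of T all three of whose parts are nonempty. Then the degree of P in the Bell 3-coloring graph B_3(T) is at most n − 1. -/
open SimpleGraph

variable {V : Type*} [Fintype V] [DecidableEq V]

/-!
A neighbour `Q` of `P` in `B₃(T)` is obtained by moving one vertex `v` into another part that
contains no neighbour of `v`. As `T` is connected and not a single vertex, every `v` has a
neighbour, which rules out one of the two other parts, so each `v` produces at most one `Q`.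
Some vertex `w` even has neighbours in two different parts, so it cannot move at all. Hence
`Q ↦ v` maps the neighbourhood of `P` injectively into `V ∖ {w}`.
-/

theorem Multiset.two_lt_card_of_mem {α : Type*} {M : Multiset α} {a b c : α} (ha : a ∈ M)
    (hb : b ∈ M) (hc : c ∈ M) (hab : a ≠ b) (hac : a ≠ c) (hbc : b ≠ c) :
    2 < Multiset.card M := by
  classical
  refine lt_of_lt_of_le ?_ M.toFinset_card_le
  exact Finset.two_lt_card_iff.2
    ⟨a, b, c, Multiset.mem_toFinset.2 ha, Multiset.mem_toFinset.2 hb,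
      Multiset.mem_toFinset.2 hc, hab, hac, hbc⟩

theorem Set.finite_and_ncard_le_of_forall_subsingleton {α β : Type*} {s : Set α} {t : Set β}
    (ht : t.Finite) (r : α → β → Prop) (hs : ∀ a ∈ s, ∃ b ∈ t, r a b)
    (hr : ∀ b ∈ t, {a | a ∈ s ∧ r a b}.Subsingleton) : s.Finite ∧ s.ncard ≤ t.ncard := by
  obtain rfl | ⟨a₀, ha₀⟩ := s.eq_empty_or_nonempty
  · simp
  have : Nonempty β := ⟨(hs a₀ ha₀).choose⟩
  choose! f hft hfr using hs
  have hinj : Set.InjOn f s := fun a ha a' ha' h =>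
    hr (f a) (hft a ha) ⟨ha, hfr a ha⟩ ⟨ha', h ▸ hfr a' ha'⟩
  exact ⟨Set.Finite.of_injOn hft hinj ht, Set.ncard_le_ncard_of_injOn f hft hinj ht⟩

theorem SimpleGraph.Preconnected.exists_adj_adj_ne {α β : Type*} {G : SimpleGraph α}
    (hG : G.Preconnected) (c : α → β) {x y z : α} (hxy : c x ≠ c y) (hxz : c x ≠ c z)
    (hyz : c y ≠ c z) : ∃ v u₁ u₂, G.Adj v u₁ ∧ G.Adj v u₂ ∧ c u₁ ≠ c u₂ := by
  by_contra! h
  obtain ⟨a, hxa⟩ : ∃ a, G.Adj x a := by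
    obtain ⟨p⟩ := hG x y
    exact ⟨_, p.adj_snd (p.not_nil_of_ne (ne_of_apply_ne c hxy))⟩
  -- Neighbours of a common vertex share a colour, so the set of colours seen at a vertex
  -- and at its neighbours is the same two-element set everywhere.
  have hall : ∀ p, c p ∈ ({c x, c a} : Set β) ∧ ∀ q, G.Adj p q → c q ∈ ({c x, c a} : Set β) := by
    intro p
    induction (reachable_iff_reflTransGen x p).1 (hG x p) with
    | refl => exact ⟨Or.inl rfl, fun q hq => Or.inr (h x a q hxa hq).symm⟩
    | tail _ hpq ih => exact ⟨ih.2 _ hpq, fun r hqr => h _ _ r hpq.symm hqr ▸ ih.1⟩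
  have hy := (hall y).1
  have hz := (hall z).1
  simp only [Set.mem_insert_iff, Set.mem_singleton_iff] at hy hz
  grind

namespace IsStablePartition

variable {G : SimpleGraph V} {k : ℕ} {P Q Q' : Multiset (Finset V)} {s t t₁ t₂ : Finset V}
  {v u u₁ u₂ : V}

omit [DecidableEq V] in
theorem exists_mem (hP : IsStablePartition G k P) (v : V) : ∃ s ∈ P, v ∈ s := by
  have hv : v ∈ (P.map Finset.val).sum := hP.2.1 ▸ Finset.mem_univ v
  obtain ⟨_, hm, hvm⟩ := Multiset.mem_join.1 hv
  obtain ⟨s, hs, rfl⟩ := Multiset.mem_map.1 hm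
  exact ⟨s, hs, hvm⟩

theorem notMem_of_mem_erase (hP : IsStablePartition G k P) (hs : s ∈ P) (hv : v ∈ s)
    (ht : t ∈ P.erase s) : v ∉ t := by
  intro hvt
  have hsum := hP.2.1
  rw [← Multiset.cons_erase hs, Multiset.map_cons, Multiset.sum_cons] at hsum
  have hdisj := (Multiset.nodup_add.1 (hsum ▸ Finset.univ.nodup)).2.2
  exact Multiset.disjoint_left.1 hdisj hv
    (Multiset.mem_join.2 ⟨t.val, Multiset.mem_map_of_mem _ ht, hvt⟩)

theorem eq_of_mem_of_mem (hP : IsStablePartition G k P) (hs : s ∈ P) (ht : t ∈ P)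
    (hvs : v ∈ s) (hvt : v ∈ t) : s = t := by
  by_contra hst
  exact hP.notMem_of_mem_erase hs hvs ((Multiset.mem_erase_of_ne (Ne.symm hst)).2 ht) hvt

theorem nodup (hP : IsStablePartition G k P) (hparts : ∀ s ∈ P, s ≠ ∅) : P.Nodup := by
  refine Multiset.nodup_iff_ne_cons_cons.2 fun s M hPM => ?_
  have hs : s ∈ P := hPM ▸ Multiset.mem_cons_self _ _
  obtain ⟨v, hv⟩ := Finset.nonempty_iff_ne_empty.2 (hparts s hs)
  refine hP.notMem_of_mem_erase hs hv ?_ hv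
  rw [hPM, Multiset.erase_cons_head]
  exact Multiset.mem_cons_self _ _

theorem card_erase_of_mem (hP : IsStablePartition G k P) (hs : s ∈ P) :
    Multiset.card (P.erase s) = k - 1 := by
  rw [Multiset.card_erase_of_mem hs, hP.1, Nat.pred_eq_sub_one]

theorem mem_erase_of_adj (hP : IsStablePartition G k P) (hs : s ∈ P) (hv : v ∈ s) (ht : t ∈ P)
    (hu : u ∈ t) (hvu : G.Adj v u) : t ∈ P.erase s :=
  (Multiset.mem_erase_of_ne fun hts : t = s => hP.2.2 s hs v hv u (hts ▸ hu) hvu).2 ht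

theorem eraseVtx_eq_cons (hP : IsStablePartition G k P) (hs : s ∈ P) (hv : v ∈ s) :
    eraseVtx P v = s.erase v ::ₘ P.erase s := by
  conv_lhs => rw [eraseVtx, ← Multiset.cons_erase hs, Multiset.map_cons]
  congr 1
  exact (Multiset.map_congr rfl fun t ht =>
    Finset.erase_eq_of_notMem (hP.notMem_of_mem_erase hs hv ht)).trans (Multiset.map_id' _)

theorem exists_eq_insert_cons_of_eraseVtx_eq (hP : IsStablePartition G k P)
    (hQ : IsStablePartition G k Q) (hs : s ∈ P) (hv : v ∈ s)
    (hE : eraseVtx Q v = eraseVtx P v) (hne : Q ≠ P) :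
    ∃ e M, P.erase s = e ::ₘ M ∧ (∀ u ∈ e, ¬ G.Adj v u) ∧
      Q = insert v e ::ₘ s.erase v ::ₘ M := by
  obtain ⟨s', hs', hv'⟩ := hQ.exists_mem v
  rw [hQ.eraseVtx_eq_cons hs' hv', hP.eraseVtx_eq_cons hs hv, Multiset.cons_eq_cons] at hE
  rcases hE with ⟨hss', hrest⟩ | ⟨-, M, hQM, hPM⟩
  · have hss : s' = s := by rw [← Finset.insert_erase hv', hss', Finset.insert_erase hv]
    refine absurd ?_ hne
    rw [← Multiset.cons_erase hs', ← Multiset.cons_erase hs, hrest, hss]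
  · refine ⟨s'.erase v, M, hPM,
      fun u hu hvu => hQ.2.2 s' hs' v hv' u (Finset.mem_of_mem_erase hu) hvu, ?_⟩
    rw [Finset.insert_erase hv', ← hQM, Multiset.cons_erase hs']

theorem eq_of_eraseVtx_eq_of_adj (hP : IsStablePartition G 3 P) (hvu : G.Adj v u)
    (hQ : IsStablePartition G 3 Q) (hQ' : IsStablePartition G 3 Q')
    (hE : eraseVtx Q v = eraseVtx P v) (hE' : eraseVtx Q' v = eraseVtx P v)
    (hne : Q ≠ P) (hne' : Q' ≠ P) : Q = Q' := by
  obtain ⟨s, hs, hv⟩ := hP.exists_mem v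
  obtain ⟨t, ht, hu⟩ := hP.exists_mem u
  obtain ⟨e, M, hPM, he, rfl⟩ := hP.exists_eq_insert_cons_of_eraseVtx_eq hQ hs hv hE hne
  obtain ⟨e', M', hPM', he', rfl⟩ := hP.exists_eq_insert_cons_of_eraseVtx_eq hQ' hs hv hE' hne'
  by_cases hee : e = e'
  · subst hee
    rw [hPM, Multiset.cons_inj_right] at hPM'
    rw [hPM']
  have := Multiset.two_lt_card_of_mem (hP.mem_erase_of_adj hs hv ht hu hvu)
    (hPM ▸ Multiset.mem_cons_self e M) (hPM' ▸ Multiset.mem_cons_self e' M')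
    (fun h : t = e => he u (h ▸ hu) hvu) (fun h : t = e' => he' u (h ▸ hu) hvu) hee
  rw [hP.card_erase_of_mem hs] at this
  omega

theorem eq_of_eraseVtx_eq_of_adj_of_adj (hP : IsStablePartition G 3 P) (h₁ : G.Adj v u₁)
    (h₂ : G.Adj v u₂) (ht₁ : t₁ ∈ P) (ht₂ : t₂ ∈ P) (hu₁ : u₁ ∈ t₁) (hu₂ : u₂ ∈ t₂)
    (ht : t₁ ≠ t₂) (hQ : IsStablePartition G 3 Q) (hE : eraseVtx Q v = eraseVtx P v) :
    Q = P := by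
  by_contra hne
  obtain ⟨s, hs, hv⟩ := hP.exists_mem v
  obtain ⟨e, M, hPM, he, -⟩ := hP.exists_eq_insert_cons_of_eraseVtx_eq hQ hs hv hE hne
  have := Multiset.two_lt_card_of_mem (hP.mem_erase_of_adj hs hv ht₁ hu₁ h₁)
    (hP.mem_erase_of_adj hs hv ht₂ hu₂ h₂) (hPM ▸ Multiset.mem_cons_self e M)
    ht (fun h : t₁ = e => he u₁ (h ▸ hu₁) h₁) (fun h : t₂ = e => he u₂ (h ▸ hu₂) h₂)
  rw [hP.card_erase_of_mem hs] at this
  omega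

theorem exists_adj_adj_mem_ne (hG : G.Preconnected) (hP : IsStablePartition G k P) (hk : 3 ≤ k)
    (hparts : ∀ s ∈ P, s ≠ ∅) :
    ∃ v u₁ u₂ t₁ t₂, G.Adj v u₁ ∧ G.Adj v u₂ ∧ t₁ ∈ P ∧ t₂ ∈ P ∧ u₁ ∈ t₁ ∧ u₂ ∈ t₂ ∧ t₁ ≠ t₂ := by
  choose c hcP hc using hP.exists_mem
  have hrep : ∀ s ∈ P.toFinset, ∃ x, c x = s := fun s hs =>
    have hs := Multiset.mem_toFinset.1 hs
    let ⟨x, hx⟩ := Finset.nonempty_iff_ne_empty.2 (hparts s hs)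
    ⟨x, hP.eq_of_mem_of_mem (hcP x) hs (hc x) hx⟩
  obtain ⟨_, _, _, h₁, h₂, h₃, h₁₂, h₁₃, h₂₃⟩ := Finset.two_lt_card_iff.1 <| by
    rw [Multiset.toFinset_card_of_nodup (hP.nodup hparts), hP.1]
    omega
  obtain ⟨x₁, rfl⟩ := hrep _ h₁
  obtain ⟨x₂, rfl⟩ := hrep _ h₂
  obtain ⟨x₃, rfl⟩ := hrep _ h₃
  obtain ⟨v, u₁, u₂, hvu₁, hvu₂, hne⟩ := hG.exists_adj_adj_ne c h₁₂ h₁₃ h₂₃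
  exact ⟨v, u₁, u₂, c u₁, c u₂, hvu₁, hvu₂, hcP u₁, hcP u₂, hc u₁, hc u₂, hne⟩

end IsStablePartition

/-- **Degree bound for partitions with three nonempty parts.** For a tree `T`
of order `n`, any stable `3`-partition all of whose parts are nonempty has
degree at most `n − 1` in the Bell `3`-coloring graph `B₃(T)`. -/
theorem bell3_tree_degree_nonempty_parts (T : SimpleGraph V) (hT : T.IsTree)
    (n : ℕ) (hn : Fintype.card V = n)
    (P : {P : Multiset (Finset V) // IsStablePartition T 3 P})
    (hparts : ∀ s ∈ P.1, s ≠ (∅ : Finset V)) :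
    ((bellGraph T 3).neighborSet P).Finite ∧
      ((bellGraph T 3).neighborSet P).ncard ≤ n - 1 := by
  have hG := hT.connected.preconnected
  obtain ⟨w, u₁, u₂, t₁, t₂, h₁, h₂, ht₁, ht₂, hu₁, hu₂, ht⟩ :=
    P.2.exists_adj_adj_mem_ne hG le_rfl hparts
  have : Nontrivial V := ⟨⟨w, u₁, h₁.ne⟩⟩
  have hcard : ({w}ᶜ : Set V).ncard = n - 1 := by
    rw [Set.ncard_compl, Set.ncard_singleton, Nat.card_eq_fintype_card, hn]
  rw [← hcard]
  refine Set.finite_and_ncard_le_of_forall_subsingleton (Set.toFinite _)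
    (fun Q v => eraseVtx Q.1 v = eraseVtx P.1 v) ?_ ?_
  · rintro Q ⟨hne, v, hv⟩
    refine ⟨v, fun hvw : v = w => hne (Subtype.ext ?_), hv.symm⟩
    subst hvw
    exact (P.2.eq_of_eraseVtx_eq_of_adj_of_adj h₁ h₂ ht₁ ht₂ hu₁ hu₂ ht Q.2 hv.symm).symm
  · intro v _ Q ⟨hQ, hQv⟩ Q' ⟨hQ', hQ'v⟩
    obtain ⟨u, hvu⟩ := hG.exists_adj_of_nontrivial v
    exact Subtype.ext <| P.2.eq_of_eraseVtx_eq_of_adj hvu Q.2 Q'.2 hQv hQ'v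
      (fun h => hQ.1 (Subtype.ext h.symm)) (fun h => hQ'.1 (Subtype.ext h.symm))
end

section
/- Let a ≥ b ≥ 1 and let T = B(3, a, b) be the double broom of order n = a + b + 3. Then the number of edges of the Bell 3-coloring graph B_3(T) is (2(a + b) + 1)·2^{a+b−1} + 2^a + 2^b − 1. -/
open SimpleGraph

variable {V : Type*} [Fintype V] [DecidableEq V]

/-- The double broom `B(3, a, b)`: a path `u–v–w` (vertices `0, 1, 2`)
together with `a` leaves adjacent to `u` (vertices `3, …, a + 2`) and `b`
leaves adjacent to `w` (vertices `a + 3, …, a + b + 2`). -/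
def doubleBroom (a b : ℕ) : SimpleGraph (Fin (a + b + 3)) :=
  SimpleGraph.fromRel (fun x y =>
    ((x : ℕ) = 0 ∧ (y : ℕ) = 1) ∨ ((x : ℕ) = 1 ∧ (y : ℕ) = 2) ∨
    ((x : ℕ) = 0 ∧ 3 ≤ (y : ℕ) ∧ (y : ℕ) < 3 + a) ∨
    ((x : ℕ) = 2 ∧ 3 + a ≤ (y : ℕ)))

/-!
A stable 3-partition is the family of colour classes of a proper 3-colouring, up to renaming
colours. On the double broom with spine `u–v–w`, the class of `v` contains neither `u` nor `w`,
so either `u, w` share a class and the leaves outside `v`'s class form the third one (type I), or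
`u, v, w` lie in three classes and each leaf outside `v`'s class joins whichever of `u, w` it is
not adjacent to (type II). A partition is thus determined by its type and the set `S` of leaves
outside `v`'s class, and every such pair occurs.

An edge of `B_3` moves a single vertex to another class. Moving a leaf toggles one element of
`S`; moving `v` (type I only) replaces `S` by its complement; moving `u` or `w` switches the type
and is possible exactly when `S` lies among the leaves at `w` or among those at `u`. So `B_3` is
two `(a + b)`-cubes, the first with its antipodal matching added, joined by `2 ^ a + 2 ^ b - 1`
edges, and summing degrees gives the count.
-/

open Finset

section ColorClasses

variable {α κ κ' : Type*} [Fintype κ] [DecidableEq κ] [Fintype κ'] [DecidableEq κ']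

def colorClasses (U : Finset α) (f : α → κ) : Multiset (Finset α) :=
  (univ : Finset κ).val.map fun i => U.filter (f · = i)

def SameClassesOn (U : Finset α) (f g : α → κ) : Prop :=
  ∀ x ∈ U, ∀ y ∈ U, (f x = f y ↔ g x = g y)

variable {U : Finset α} {f g : α → κ}

@[simp] lemma card_colorClasses : Multiset.card (colorClasses U f) = Fintype.card κ := by
  simp [colorClasses, Finset.card_univ]

lemma sum_val_colorClasses : ((colorClasses U f).map Finset.val).sum = U.val := by
  classical
  ext x
  rw [colorClasses, Multiset.map_map, ← Finset.sum_eq_multiset_sum, Multiset.count_sum']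
  by_cases hx : x ∈ U
  · rw [Finset.sum_eq_single (f x)] <;> simp_all [eq_comm]
  · simp_all

lemma eraseVtx_colorClasses [DecidableEq α] (z : α) :
    eraseVtx (colorClasses U f) z = colorClasses (U.erase z) f := by
  simp [eraseVtx, colorClasses, Multiset.map_map, Finset.filter_erase]

lemma exists_mem_colorClasses_iff {x y : α} :
    (∃ s ∈ colorClasses U f, x ∈ s ∧ y ∈ s) ↔ x ∈ U ∧ y ∈ U ∧ f x = f y := by
  simp only [colorClasses, Multiset.mem_map, Finset.mem_val, Finset.mem_univ, true_and]
  constructor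
  · rintro ⟨_, ⟨i, rfl⟩, hx, hy⟩
    simp only [Finset.mem_filter] at hx hy
    exact ⟨hx.1, hy.1, hx.2.trans hy.2.symm⟩
  · rintro ⟨hx, hy, h⟩
    exact ⟨_, ⟨f x, rfl⟩, by simp [hx], by simp [hy, h]⟩

lemma sameClassesOn_of_colorClasses_eq (h : colorClasses U f = colorClasses U g) :
    SameClassesOn U f g := fun x hx y hy => by
  have key := (exists_mem_colorClasses_iff (U := U) (f := f) (x := x) (y := y)).symm
  rw [h, exists_mem_colorClasses_iff] at key
  simpa [hx, hy] using key

lemma colorClasses_equiv_comp (e : κ ≃ κ') : colorClasses U (e ∘ f) = colorClasses U f := by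
  rw [colorClasses, ← Multiset.map_univ_val_equiv e, Multiset.map_map]
  simp [colorClasses, e.injective.eq_iff]

lemma colorClasses_congr (h : ∀ x ∈ U, f x = g x) : colorClasses U f = colorClasses U g :=
  Multiset.map_congr rfl fun _ _ => Finset.filter_congr fun x hx => by rw [h x hx]

end ColorClasses

section StablePartition

variable {α κ : Type*} [Fintype α] [Fintype κ] [DecidableEq κ]

lemma exists_map_eq_colorClasses (p : κ → Finset α) (hp : ∑ i, (p i).val = univ.val) :
    ∃ f : α → κ, univ.val.map p = colorClasses univ f := by
  classical
  have hcount (x : α) : ∑ i, (p i).val.count x = 1 := by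
    rw [← Multiset.count_sum', hp, Multiset.count_univ]
  have hmem (x : α) : ∃ i, x ∈ p i := by
    by_contra! h
    simpa [h] using hcount x
  have huniq {x : α} {i j : κ} (hi : x ∈ p i) (hj : x ∈ p j) : i = j := by
    by_contra hij
    have := Finset.add_le_sum (f := fun k => (p k).val.count x) (fun _ _ => Nat.zero_le _)
      (mem_univ i) (mem_univ j) hij
    rw [Multiset.count_eq_one_of_mem (p i).nodup hi,
      Multiset.count_eq_one_of_mem (p j).nodup hj] at this
    simp [hcount] at this
  choose f hf using hmem
  refine ⟨f, Multiset.map_congr rfl fun i _ => ?_⟩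
  ext x
  simp only [mem_filter, mem_univ, true_and]
  exact ⟨fun hx => huniq (hf x) hx, fun hx => hx ▸ hf x⟩

lemma exists_eq_colorClasses {P : Multiset (Finset α)} {k : ℕ} (hcard : Multiset.card P = k)
    (hsum : (P.map Finset.val).sum = univ.val) : ∃ f : α → Fin k, P = colorClasses univ f := by
  have hP : P = univ.val.map P.toList.get := by
    rw [Fin.univ_val_map, List.ofFn_get, Multiset.coe_toList]
  obtain ⟨f, hf⟩ := exists_map_eq_colorClasses P.toList.get (by
    rw [Finset.sum_eq_multiset_sum, ← Function.comp_def, ← Multiset.map_map, ← hP, hsum])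
  refine ⟨finCongr (by simp [hcard]) ∘ f, ?_⟩
  rw [colorClasses_equiv_comp, ← hf, ← hP]

lemma isStablePartition_colorClasses_iff {G : SimpleGraph α} {k : ℕ} {f : α → Fin k} :
    IsStablePartition G k (colorClasses univ f) ↔ ∀ x y, G.Adj x y → f x ≠ f y := by
  refine ⟨fun h x y hxy hfxy => ?_, fun h => ⟨by simp, sum_val_colorClasses, ?_⟩⟩
  · obtain ⟨s, hs, hx, hy⟩ := exists_mem_colorClasses_iff.2 ⟨mem_univ x, mem_univ y, hfxy⟩
    exact h.2.2 s hs x hx y hy hxy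
  · intro s hs x hx y hy hxy
    obtain ⟨-, -, hfxy⟩ := exists_mem_colorClasses_iff.1 ⟨s, hs, hx, hy⟩
    exact h x y hxy hfxy

end StablePartition

namespace Finset

variable {ι : Type*} [DecidableEq ι]

lemma eq_symmDiff_singleton_of_forall_ne {S T : Finset ι} {l : ι} (hST : S ≠ T)
    (h : ∀ i ≠ l, i ∈ S ↔ i ∈ T) : T = symmDiff S {l} := by
  have hl : ¬(l ∈ S ↔ l ∈ T) := fun hl =>
    hST (ext fun i => if hi : i = l then hi ▸ hl else h i hi)
  ext i
  by_cases hi : i = l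
  · subst hi
    simp only [mem_symmDiff, mem_singleton, not_true_eq_false, and_false, false_or]
    tauto
  · simp [mem_symmDiff, hi, h i hi]

variable [Fintype ι]

lemma eq_compl_of_forall_iff_iff {S T : Finset ι} (hST : S ≠ T)
    (h : ∀ i j, ((i ∈ S ↔ j ∈ S) ↔ (i ∈ T ↔ j ∈ T))) : T = Sᶜ := by
  obtain ⟨i, hi⟩ : ∃ i, ¬(i ∈ S ↔ i ∈ T) := by
    by_contra! hall
    exact hST (ext hall)
  ext j
  have := h i j
  simp only [mem_compl]
  tauto

lemma symmDiff_singleton_ne_compl (h : 2 ≤ Fintype.card ι) (S : Finset ι) (i : ι) :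
    symmDiff S {i} ≠ Sᶜ := by
  obtain ⟨j, hj⟩ : ∃ j, j ≠ i := by
    by_contra! hall
    have := Fintype.card_le_one_iff.2 fun x y => (hall x).trans (hall y).symm
    omega
  intro hS
  simpa [mem_symmDiff, hj] using congrArg (j ∈ ·) hS

end Finset

namespace DoubleBroom

section ModelGraph

variable {ι : Type*} [Fintype ι] [DecidableEq ι] (A : Finset ι)

def Move (p q : Bool × Finset ι) : Prop :=
  (p.1 = q.1 ∧ ∃ i, q.2 = symmDiff p.2 {i}) ∨
    (p.1 = false ∧ q.1 = false ∧ q.2 = p.2ᶜ) ∨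
    (p.1 = false ∧ q.1 = true ∧ q.2 = p.2 ∧ (p.2 ⊆ A ∨ p.2 ⊆ Aᶜ))

/-- Isomorphic to `B_3(B(3, a, b))` for `ι = Fin (a + b)` and `A` the leaves at `u`
(`partitionIso`): the three kinds of `Move` are moving a leaf, moving `v`, and moving `u` or `w`. -/
def modelGraph : SimpleGraph (Bool × Finset ι) := SimpleGraph.fromRel (Move A)

instance : DecidableRel (modelGraph A).Adj := by
  unfold modelGraph Move
  infer_instance

variable {A}

lemma neighborFinset_modelGraph (h : 2 ≤ Fintype.card ι) (c : Bool) (S : Finset ι) :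
    (modelGraph A).neighborFinset (c, S) =
      univ.image (fun i => (c, symmDiff S {i})) ∪
        ((if c = false then {(false, Sᶜ)} else ∅) ∪
          (if S ⊆ A ∨ S ⊆ Aᶜ then {(!c, S)} else ∅)) := by
  have : Nonempty ι := Fintype.card_pos_iff.1 (by omega)
  ext ⟨c', T⟩
  rw [SimpleGraph.mem_neighborFinset, modelGraph, SimpleGraph.fromRel_adj]
  have hflip : (∃ i, S = symmDiff T {i}) ↔ ∃ i, T = symmDiff S {i} := by
    constructor <;> rintro ⟨i, rfl⟩ <;> exact ⟨i, by simp [symmDiff_symmDiff_cancel_right]⟩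
  have hflip' : (∃ i, symmDiff S {i} = T) ↔ ∃ i, T = symmDiff S {i} := by simp [eq_comm]
  have hc : S = Tᶜ ↔ T = Sᶜ := eq_compl_comm
  have hne : (∃ i, T = symmDiff S {i}) → S ≠ T := by
    rintro ⟨i, rfl⟩
    simp [eq_comm (a := S), symmDiff_eq_left]
  have hne' : T = Sᶜ → S ≠ T := by
    rintro rfl
    exact compl_ne_self.symm
  by_cases hS : S ⊆ A ∨ S ⊆ Aᶜ <;> cases c <;> cases c' <;> simp [Move, hS] <;>
    try simp only [hflip, hflip', hc]
  all_goals first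
    | exact ⟨fun h => h.2.elim id id, fun h => ⟨hne h, .inl h⟩⟩
    | exact ⟨fun h => h.1.symm, fun h => ⟨h.symm, h ▸ hS⟩⟩
    | (rintro rfl; simpa [not_or] using hS)
    | exact ⟨fun ⟨_, h⟩ => by rcases h with (h | h) | h | h <;> simp [h],
        fun h => ⟨h.elim hne' hne, h.elim (.inl ∘ .inr) (.inl ∘ .inl)⟩⟩

lemma degree_modelGraph (h : 2 ≤ Fintype.card ι) (c : Bool) (S : Finset ι) :
    (modelGraph A).degree (c, S) =
      Fintype.card ι +
        ((if c = false then 1 else 0) + (if S ⊆ A ∨ S ⊆ Aᶜ then 1 else 0)) := by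
  rw [← SimpleGraph.card_neighborFinset_eq_degree, neighborFinset_modelGraph h,
    card_union_of_disjoint, card_union_of_disjoint, card_image_of_injective, card_univ]
  · congr 1
    split_ifs <;> simp
  · intro i j hij
    simpa using hij
  · split_ifs with hc <;> simp [hc]
  · rw [disjoint_union_right]
    constructor <;> split_ifs with hc <;> simp [hc, symmDiff_singleton_ne_compl h S]

lemma card_filter_subset_or_subset_compl :
    #{S : Finset ι | S ⊆ A ∨ S ⊆ Aᶜ} = 2 ^ #A + 2 ^ #Aᶜ - 1 := by
  have hunion : univ.filter (fun S => S ⊆ A ∨ S ⊆ Aᶜ) = A.powerset ∪ Aᶜ.powerset := by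
    ext S
    simp
  have hinter : A.powerset ∩ Aᶜ.powerset = {∅} := by
    ext S
    simp only [mem_inter, mem_powerset, mem_singleton, ← subset_inter_iff, inter_compl,
      subset_empty]
  have := card_union_add_card_inter A.powerset Aᶜ.powerset
  rw [hinter, card_powerset, card_powerset, card_singleton] at this
  rw [hunion]
  omega

lemma card_edgeFinset_modelGraph (h : 2 ≤ Fintype.card ι) :
    #(modelGraph A).edgeFinset =
      (2 * Fintype.card ι + 1) * 2 ^ (Fintype.card ι - 1) + 2 ^ #A + 2 ^ #Aᶜ - 1 := by
  have hsum := (modelGraph A).sum_degrees_eq_twice_card_edges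
  rw [Fintype.sum_prod_type] at hsum
  simp only [degree_modelGraph h, sum_add_distrib, sum_const, sum_boole, card_univ,
    Fintype.card_finset, smul_eq_mul, Fintype.sum_bool, card_filter_subset_or_subset_compl,
    Fintype.card_bool, Bool.true_eq_false, if_false, if_true, mul_one, mul_zero, zero_add,
    Nat.cast_id] at hsum
  have hpow : 2 ^ Fintype.card ι = 2 * 2 ^ (Fintype.card ι - 1) := by
    rw [← pow_succ']
    congr 1
    omega
  have hA : 1 ≤ 2 ^ #A := Nat.one_le_two_pow
  rw [hpow] at hsum
  zify [le_add_right hA, le_add_right (le_add_left hA)] at hsum ⊢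
  linarith

end ModelGraph

variable {a b : ℕ}

def u : Fin (a + b + 3) := ⟨0, by omega⟩
def v : Fin (a + b + 3) := ⟨1, by omega⟩
def w : Fin (a + b + 3) := ⟨2, by omega⟩
def leaf (i : Fin (a + b)) : Fin (a + b + 3) := ⟨i + 3, by omega⟩

def uLeaves : Finset (Fin (a + b)) := {i | (i : ℕ) < a}

@[simp] lemma val_u : (u : Fin (a + b + 3)).val = 0 := rfl
@[simp] lemma val_v : (v : Fin (a + b + 3)).val = 1 := rfl
@[simp] lemma val_w : (w : Fin (a + b + 3)).val = 2 := rfl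
@[simp] lemma val_leaf (i : Fin (a + b)) : (leaf i).val = i + 3 := rfl

lemma vertex_cases (x : Fin (a + b + 3)) : x = u ∨ x = v ∨ x = w ∨ ∃ i, x = leaf i := by
  obtain ⟨_ | _ | _ | n, hx⟩ := x
  · exact .inl rfl
  · exact .inr (.inl rfl)
  · exact .inr (.inr (.inl rfl))
  · exact .inr (.inr (.inr ⟨⟨n, by omega⟩, rfl⟩))

section Adjacency

variable {i j : Fin (a + b)}

@[simp] lemma adj_u_v : (doubleBroom a b).Adj u v := by
  rw [doubleBroom, SimpleGraph.fromRel_adj]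
  simp [Fin.ext_iff]

@[simp] lemma adj_v_w : (doubleBroom a b).Adj v w := by
  rw [doubleBroom, SimpleGraph.fromRel_adj]
  simp [Fin.ext_iff]

@[simp] lemma adj_u_leaf : (doubleBroom a b).Adj u (leaf i) ↔ (i : ℕ) < a := by
  rw [doubleBroom, SimpleGraph.fromRel_adj]
  simp [Fin.ext_iff]
  omega

@[simp] lemma adj_w_leaf : (doubleBroom a b).Adj w (leaf i) ↔ a ≤ (i : ℕ) := by
  rw [doubleBroom, SimpleGraph.fromRel_adj]
  simp [Fin.ext_iff]
  omega

@[simp] lemma not_adj_u_w : ¬(doubleBroom a b).Adj u w := by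
  rw [doubleBroom, SimpleGraph.fromRel_adj]
  simp [Fin.ext_iff]

@[simp] lemma not_adj_v_leaf : ¬(doubleBroom a b).Adj v (leaf i) := by
  rw [doubleBroom, SimpleGraph.fromRel_adj]
  simp [Fin.ext_iff]

@[simp] lemma not_adj_leaf_leaf : ¬(doubleBroom a b).Adj (leaf i) (leaf j) := by
  rw [doubleBroom, SimpleGraph.fromRel_adj]
  simp [Fin.ext_iff]

end Adjacency

/-- The colourings of type I (`c = false`) and type II (`c = true`), where `S` is the set of leaves
outside the class of `v`. -/
def coloring (c : Bool) (S : Finset (Fin (a + b))) : Fin (a + b + 3) → Fin 3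
  | ⟨0, _⟩ => 0
  | ⟨1, _⟩ => 1
  | ⟨2, _⟩ => if c then 2 else 0
  | ⟨i + 3, _⟩ => if ⟨i, by omega⟩ ∈ S then (if c ∧ a ≤ i then 0 else 2) else 1

section Coloring

variable {c c' : Bool} {S T : Finset (Fin (a + b))} {i j : Fin (a + b)}

@[simp] lemma coloring_u : coloring c S u = 0 := rfl
@[simp] lemma coloring_v : coloring c S v = 1 := rfl
@[simp] lemma coloring_w : coloring c S w = if c then 2 else 0 := rfl
@[simp] lemma coloring_leaf :
    coloring c S (leaf i) = if i ∈ S then (if c ∧ a ≤ (i : ℕ) then 0 else 2) else 1 := rfl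

lemma coloring_proper (x y : Fin (a + b + 3)) (h : (doubleBroom a b).Adj x y) :
    coloring c S x ≠ coloring c S y := by
  rcases vertex_cases x with rfl | rfl | rfl | ⟨i, rfl⟩ <;>
  rcases vertex_cases y with rfl | rfl | rfl | ⟨j, rfl⟩ <;>
  first | simp at h | (rw [SimpleGraph.adj_comm] at h; simp at h)
  all_goals
    simp only [coloring_u, coloring_v, coloring_w, coloring_leaf]
    (try split_ifs) <;> simp_all <;> omega

lemma coloring_u_eq_w_iff : coloring c S u = coloring c S w ↔ c = false := by
  cases c <;> simp

lemma coloring_leaf_eq_v_iff : coloring c S (leaf i) = coloring c S v ↔ i ∉ S := by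
  simp only [coloring_leaf, coloring_v]
  split_ifs <;> simp_all

lemma coloring_leaf_eq_u_iff :
    coloring c S (leaf i) = coloring c S u ↔ c = true ∧ i ∈ S ∧ a ≤ (i : ℕ) := by
  simp only [coloring_leaf, coloring_u]
  split_ifs <;> simp_all

lemma coloring_leaf_eq_w_iff :
    coloring c S (leaf i) = coloring c S w ↔ c = true ∧ i ∈ S ∧ (i : ℕ) < a := by
  cases c <;> simp only [coloring_leaf, coloring_w] <;> split_ifs <;> simp_all

lemma coloring_false_leaf_eq_leaf_iff :
    coloring false S (leaf i) = coloring false S (leaf j) ↔ (i ∈ S ↔ j ∈ S) := by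
  simp only [coloring_leaf]
  split_ifs <;> simp_all

variable {U : Finset (Fin (a + b + 3))}

lemma fst_eq_of_sameClassesOn (h : SameClassesOn U (coloring c S) (coloring c' T))
    (hu : u ∈ U) (hw : w ∈ U) : c = c' := by
  have := h u hu w hw
  simp only [coloring_u_eq_w_iff] at this
  cases c <;> cases c' <;> simp_all

lemma mem_iff_of_sameClassesOn (h : SameClassesOn U (coloring c S) (coloring c' T))
    (hv : v ∈ U) (hi : leaf i ∈ U) : i ∈ S ↔ i ∈ T := by
  simpa only [coloring_leaf_eq_v_iff, not_iff_not] using h _ hi _ hv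

end Coloring

lemma exists_equiv_fin_three {p q r : Fin 3} (hpq : p ≠ q) (hpr : p ≠ r) (hqr : q ≠ r) :
    ∃ e : Fin 3 ≃ Fin 3, e 0 = p ∧ e 1 = q ∧ e 2 = r :=
  ⟨.ofBijective ![p, q, r] <| Finite.injective_iff_bijective.1 fun i j => by
    fin_cases i <;> fin_cases j <;> simp_all [eq_comm], rfl, rfl, rfl⟩

lemma exists_eq_comp_coloring {f : Fin (a + b + 3) → Fin 3}
    (hf : ∀ x y, (doubleBroom a b).Adj x y → f x ≠ f y) :
    ∃ c S, ∃ e : Fin 3 ≃ Fin 3, ∀ x, f x = e (coloring c S x) := by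
  have huv := hf _ _ adj_u_v
  have hvw := hf _ _ adj_v_w
  have hu (i : Fin (a + b)) (hi : (i : ℕ) < a) := (hf _ _ (adj_u_leaf.2 hi)).symm
  have hw (i : Fin (a + b)) (hi : a ≤ (i : ℕ)) := (hf _ _ (adj_w_leaf.2 hi)).symm
  obtain ⟨r, hru, hrv, hrw⟩ : ∃ r, r ≠ f u ∧ r ≠ f v ∧ (f u ≠ f w → r = f w) := by
    by_cases huw : f u = f w
    · have : ∀ p q : Fin 3, ∃ r, r ≠ p ∧ r ≠ q := by decide
      obtain ⟨r, hr⟩ := this (f u) (f v)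
      exact ⟨r, hr.1, hr.2, absurd huw⟩
    · exact ⟨f w, Ne.symm huw, hvw.symm, fun _ => rfl⟩
  obtain ⟨e, he0, he1, he2⟩ := exists_equiv_fin_three huv hru.symm hrv.symm
  refine ⟨decide (f u ≠ f w), univ.filter fun i => f (leaf i) ≠ f v, e, fun x => ?_⟩
  rcases vertex_cases x with rfl | rfl | rfl | ⟨i, rfl⟩
  · simp [he0]
  · simp [he1]
  · by_cases huw : f u = f w <;> simp [huw, he0, he2, hrw]
  · by_cases hiv : f (leaf i) = f v
    · simp [hiv, he1]
    · by_cases hia : a ≤ (i : ℕ)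
      · have := hw i hia
        by_cases huw : f u = f w
        · simp [hiv, huw, he2]
          omega
        · simp [hiv, huw, hia, he0]
          omega
      · have := hu i (by omega)
        simp [hiv, hia, he2]
        omega

def partition (p : Bool × Finset (Fin (a + b))) :
    {P // IsStablePartition (doubleBroom a b) 3 P} :=
  ⟨colorClasses univ (coloring p.1 p.2), isStablePartition_colorClasses_iff.2 coloring_proper⟩

lemma val_partition (p : Bool × Finset (Fin (a + b))) :
    (partition p).1 = colorClasses univ (coloring p.1 p.2) := rfl

lemma partition_surjective : Function.Surjective (partition (a := a) (b := b)) := by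
  rintro ⟨P, hP⟩
  obtain ⟨f, rfl⟩ := exists_eq_colorClasses hP.1 hP.2.1
  obtain ⟨c, S, e, he⟩ := exists_eq_comp_coloring (isStablePartition_colorClasses_iff.1 hP)
  exact ⟨(c, S), Subtype.ext <|
    (colorClasses_equiv_comp e).symm.trans (colorClasses_congr fun x _ => (he x).symm)⟩

lemma partition_injective : Function.Injective (partition (a := a) (b := b)) := by
  rintro ⟨c, S⟩ ⟨c', T⟩ h
  have hK := sameClassesOn_of_colorClasses_eq <| by
    simpa only [val_partition] using congrArg Subtype.val h
  obtain rfl := fst_eq_of_sameClassesOn hK (mem_univ _) (mem_univ _)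
  rw [ext fun i => mem_iff_of_sameClassesOn hK (mem_univ _) (mem_univ (leaf i))]

lemma modelGraph_adj_of_sameClassesOn_erase {p q : Bool × Finset (Fin (a + b))}
    {z : Fin (a + b + 3)} (hpq : p ≠ q)
    (h : SameClassesOn (univ.erase z) (coloring p.1 p.2) (coloring q.1 q.2)) :
    (modelGraph uLeaves).Adj p q := by
  obtain ⟨c, S⟩ := p
  obtain ⟨c', T⟩ := q
  refine ⟨hpq, ?_⟩
  rcases vertex_cases z with rfl | rfl | rfl | ⟨l, rfl⟩
  · obtain rfl : S = T := ext fun i =>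
      mem_iff_of_sameClassesOn h (by simp [Fin.ext_iff]) (by simp [Fin.ext_iff])
    have hsub : S ⊆ uLeavesᶜ := fun i hi => by
      have := h (leaf i) (by simp [Fin.ext_iff]) w (by simp [Fin.ext_iff])
      simp only [coloring_leaf_eq_w_iff] at this
      cases c <;> cases c' <;> simp_all [uLeaves]
    cases c <;> cases c' <;> simp_all [Move]
  · obtain rfl := fst_eq_of_sameClassesOn h (by simp [Fin.ext_iff]) (by simp [Fin.ext_iff])
    cases c
    · have hST : S ≠ T := fun hST => hpq (by rw [hST])
      refine .inl (.inr (.inl ⟨rfl, rfl, eq_compl_of_forall_iff_iff hST fun i j => ?_⟩))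
      simpa only [coloring_false_leaf_eq_leaf_iff] using
        h (leaf i) (by simp [Fin.ext_iff]) (leaf j) (by simp [Fin.ext_iff])
    · refine absurd (ext fun i => ?_) fun hST : S = T => hpq (by rw [hST])
      have hu := h (leaf i) (by simp [Fin.ext_iff]) u (by simp [Fin.ext_iff])
      have hw := h (leaf i) (by simp [Fin.ext_iff]) w (by simp [Fin.ext_iff])
      simp only [coloring_leaf_eq_u_iff, coloring_leaf_eq_w_iff] at hu hw
      by_cases hi : a ≤ (i : ℕ) <;> simp_all
  · obtain rfl : S = T := ext fun i =>
      mem_iff_of_sameClassesOn h (by simp [Fin.ext_iff]) (by simp [Fin.ext_iff])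
    have hsub : S ⊆ uLeaves := fun i hi => by
      have := h (leaf i) (by simp [Fin.ext_iff]) u (by simp [Fin.ext_iff])
      simp only [coloring_leaf_eq_u_iff] at this
      cases c <;> cases c' <;> simp_all [uLeaves]
    cases c <;> cases c' <;> simp_all [Move]
  · obtain rfl := fst_eq_of_sameClassesOn h (by simp [Fin.ext_iff]) (by simp [Fin.ext_iff])
    have hST : S ≠ T := fun hST => hpq (by rw [hST])
    exact .inl (.inl ⟨rfl, l, eq_symmDiff_singleton_of_forall_ne hST fun i hi =>
      mem_iff_of_sameClassesOn h (by simp [Fin.ext_iff]) (by simpa [Fin.ext_iff] using hi)⟩)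

lemma exists_colorClasses_erase_eq_of_move {p q : Bool × Finset (Fin (a + b))}
    (h : Move uLeaves p q) : ∃ z : Fin (a + b + 3),
      colorClasses (univ.erase z) (coloring p.1 p.2) =
        colorClasses (univ.erase z) (coloring q.1 q.2) := by
  obtain ⟨c, S⟩ := p
  obtain ⟨c', T⟩ := q
  rcases h with ⟨rfl, i, rfl⟩ | ⟨rfl, rfl, rfl⟩ | ⟨rfl, rfl, rfl, hS | hS⟩
  · refine ⟨leaf i, colorClasses_congr fun x hx => ?_⟩
    rcases vertex_cases x with rfl | rfl | rfl | ⟨j, rfl⟩ <;>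
      simp_all [mem_symmDiff, Fin.ext_iff]
  · refine ⟨v, (colorClasses_congr fun x hx => ?_).trans (colorClasses_equiv_comp (.swap 1 2))⟩
    rcases vertex_cases x with rfl | rfl | rfl | ⟨j, rfl⟩ <;>
      rw [mem_erase, ne_eq, Fin.ext_iff] at hx <;> simp_all [Equiv.swap_apply_def]
  · refine ⟨w, colorClasses_congr fun x hx => ?_⟩
    rcases vertex_cases x with rfl | rfl | rfl | ⟨j, rfl⟩ <;>
      rw [mem_erase, ne_eq, Fin.ext_iff] at hx <;> simp_all
    by_cases hj : j ∈ T
    · have hja : (j : ℕ) < a := by simpa [uLeaves] using hS hj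
      simp [hj, hja]
    · simp [hj]
  · refine ⟨u, (colorClasses_congr fun x hx => ?_).trans (colorClasses_equiv_comp (.swap 0 2))⟩
    rcases vertex_cases x with rfl | rfl | rfl | ⟨j, rfl⟩ <;>
      rw [mem_erase, ne_eq, Fin.ext_iff] at hx <;> simp_all [Equiv.swap_apply_def]
    by_cases hj : j ∈ T
    · have hja : a ≤ (j : ℕ) := by simpa [uLeaves] using hS hj
      simp [hj, hja]
    · simp [hj]

noncomputable def partitionIso :
    modelGraph (uLeaves (a := a) (b := b)) ≃g bellGraph (doubleBroom a b) 3 where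
  toEquiv := .ofBijective partition ⟨partition_injective, partition_surjective⟩
  map_rel_iff' {p q} := by
    change (bellGraph _ 3).Adj (partition p) (partition q) ↔ _
    simp only [bellGraph, val_partition, eraseVtx_colorClasses]
    constructor
    · rintro ⟨hne, z, hz⟩
      exact modelGraph_adj_of_sameClassesOn_erase (fun h => hne (h ▸ rfl))
        (sameClassesOn_of_colorClasses_eq hz)
    · intro h
      refine ⟨fun he => h.ne (partition_injective he), ?_⟩
      rcases h.2 with h' | h'
      · exact exists_colorClasses_erase_eq_of_move h'
      · obtain ⟨z, hz⟩ := exists_colorClasses_erase_eq_of_move h'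
        exact ⟨z, hz.symm⟩

lemma card_uLeaves : #(uLeaves (a := a) (b := b)) = a := by
  simp [uLeaves, Fin.card_filter_val_lt]

lemma card_compl_uLeaves : #(uLeaves (a := a) (b := b))ᶜ = b := by
  rw [card_compl, card_uLeaves, Fintype.card_fin]
  omega

end DoubleBroom

/-- **Edge count for double brooms.** For `a ≥ b ≥ 1`, the Bell `3`-coloring
graph of the double broom `B(3, a, b)` has exactly
`(2(a + b) + 1)·2^{a+b−1} + 2^a + 2^b − 1` edges. -/
theorem doubleBroom_bell3_edge_count (a b : ℕ) (hb : 1 ≤ b) (hab : b ≤ a) :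
    ((bellGraph (doubleBroom a b) 3).edgeSet).Finite ∧
      ((bellGraph (doubleBroom a b) 3).edgeSet).ncard =
        (2 * (a + b) + 1) * 2 ^ (a + b - 1) + 2 ^ a + 2 ^ b - 1 := by
  let e := DoubleBroom.partitionIso (a := a) (b := b)
  have hcount :=
    DoubleBroom.card_edgeFinset_modelGraph (A := DoubleBroom.uLeaves (a := a) (b := b))
      (by rw [Fintype.card_fin]; omega)
  rw [Fintype.card_fin, DoubleBroom.card_uLeaves, DoubleBroom.card_compl_uLeaves] at hcount
  refine ⟨Set.finite_coe_iff.1 (Finite.of_equiv _ e.mapEdgeSet), ?_⟩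
  rw [← Nat.card_coe_set_eq, ← Nat.card_congr e.mapEdgeSet, Nat.card_coe_set_eq,
    ← SimpleGraph.coe_edgeFinset, Set.ncard_coe_finset, hcount]
end

section
/- Let G be a finite simple graph of order n with vertex set {v_1, …, v_n}, let Q = {{v_1}, …, {v_n}} be the singleton stable n-partition, and let N(Q) be the neighborhood of Q in B_n(G). Then the subgraph of B_n(G) induced on N(Q) is isomorphic to the line graph L(Ḡ) of the complement of G. -/
open SimpleGraph

variable {V : Type*} [Fintype V] [DecidableEq V]

/-!
A neighbour `P` of the singleton partition `Q` satisfies `P − v = Q − v` for some `v`. As `v` lies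
in exactly one part of `P`, `P` is recovered from `Q − v` by putting `v` back into one of its
parts: putting it into the empty part gives `Q` again, putting it into a singleton `{u}` gives the
partition with parts `∅`, `{u, v}` and singletons, which is stable iff `uv` is an edge of `Ḡ`.
Two such partitions coming from different edges agree after deleting `w` iff `w` is an endpoint
of both edges.
-/
section

variable {α : Type*} [DecidableEq α]

theorem Sym2.toFinset_inj {z z' : Sym2 α} : z.toFinset = z'.toFinset ↔ z = z' :=
  ⟨fun h => Sym2.ext fun x => by rw [← Sym2.mem_toFinset, h, Sym2.mem_toFinset], congrArg _⟩

theorem SimpleGraph.card_toFinset_of_mem_edgeSet {H : SimpleGraph α} {e : Sym2 α}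
    (he : e ∈ H.edgeSet) : e.toFinset.card = 2 :=
  Sym2.card_toFinset_of_not_isDiag e (H.not_isDiag_of_mem_edgeSet he)

@[simp]
theorem eraseVtx_cons (s : Finset α) (P : Multiset (Finset α)) (v : α) :
    eraseVtx (s ::ₘ P) v = s.erase v ::ₘ eraseVtx P v :=
  Multiset.map_cons _ _ _

theorem eraseVtx_eq_self {P : Multiset (Finset α)} {v : α} (h : ∀ s ∈ P, v ∉ s) :
    eraseVtx P v = P :=
  (Multiset.map_congr rfl fun s hs => Finset.erase_eq_of_notMem (h s hs)).trans P.map_id'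

theorem exists_eq_insert_cons_erase_eraseVtx {P : Multiset (Finset α)} {v : α}
    (hnd : (P.map Finset.val).sum.Nodup) (hv : v ∈ (P.map Finset.val).sum) :
    ∃ t ∈ eraseVtx P v, P = insert v t ::ₘ (eraseVtx P v).erase t := by
  obtain ⟨m, hm, hvs⟩ := Multiset.mem_join.mp hv
  obtain ⟨s, hsP, rfl⟩ := Multiset.mem_map.mp hm
  obtain ⟨R, rfl⟩ : ∃ R, P = s ::ₘ R := ⟨P.erase s, (Multiset.cons_erase hsP).symm⟩
  have hR : ∀ r ∈ R, v ∉ r := fun r hr hvr => by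
    rw [Multiset.map_cons, Multiset.sum_cons, Multiset.nodup_add] at hnd
    exact Multiset.disjoint_left.mp hnd.2.2 hvs
      (Multiset.mem_join.mpr ⟨r.val, Multiset.mem_map_of_mem _ hr, hvr⟩)
  rw [eraseVtx_cons, eraseVtx_eq_self hR]
  exact ⟨s.erase v, Multiset.mem_cons_self _ _, by
    rw [Multiset.erase_cons_head, Finset.insert_erase hvs]⟩

def singletonParts (s : Finset α) : Multiset (Finset α) :=
  s.val.map singleton

theorem singletonParts_eq_cons {s : Finset α} {u : α} (hu : u ∈ s) :
    singletonParts s = {u} ::ₘ singletonParts (s.erase u) := by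
  conv_lhs => rw [← Finset.insert_erase hu]
  rw [singletonParts, Finset.insert_val_of_notMem (Finset.notMem_erase u s), Multiset.map_cons]
  rfl

theorem eraseVtx_singletonParts {s : Finset α} {v : α} (hv : v ∈ s) :
    eraseVtx (singletonParts s) v = ∅ ::ₘ singletonParts (s.erase v) := by
  rw [singletonParts_eq_cons hv, eraseVtx_cons, Finset.erase_singleton, eraseVtx_eq_self]
  simp only [singletonParts, Multiset.mem_map, Finset.mem_val]
  rintro _ ⟨w, hw, rfl⟩
  simpa using (Finset.ne_of_mem_erase hw).symm

end

section PairPartition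

def pairPartition (s : Finset V) : Multiset (Finset V) :=
  ∅ ::ₘ s ::ₘ singletonParts (Finset.univ \ s)

theorem mem_pairPartition_self (s : Finset V) : s ∈ pairPartition s :=
  Multiset.mem_cons_of_mem (Multiset.mem_cons_self _ _)

theorem eq_of_mem_pairPartition {s p : Finset V} (hp : p ∈ pairPartition s) (h2 : 2 ≤ p.card) :
    p = s := by
  simp only [pairPartition, singletonParts, Multiset.mem_cons, Multiset.mem_map] at hp
  rcases hp with rfl | rfl | ⟨w, -, rfl⟩ <;> simp_all

theorem pairPartition_inj {s t : Finset V} (hs : s.card = 2)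
    (h : pairPartition s = pairPartition t) : s = t :=
  eq_of_mem_pairPartition (h ▸ mem_pairPartition_self s) hs.ge

theorem pairPartition_ne_singletonParts (s : Finset V) :
    pairPartition s ≠ singletonParts Finset.univ := fun h => by
  have h0 : ∅ ∈ singletonParts (Finset.univ : Finset V) := h ▸ Multiset.mem_cons_self _ _
  obtain ⟨w, -, hw⟩ := Multiset.mem_map.mp h0
  exact Finset.singleton_ne_empty w hw

theorem sum_pairPartition (s : Finset V) :
    ((pairPartition s).map Finset.val).sum = Finset.univ.val := by
  simp only [pairPartition, singletonParts, Multiset.map_cons, Multiset.sum_cons, Multiset.map_map,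
    Function.comp_def, Finset.singleton_val, Multiset.sum_map_singleton, Finset.empty_val, zero_add,
    Finset.sdiff_val]
  exact add_tsub_cancel_of_le (Finset.val_le_iff.mpr s.subset_univ)

theorem card_pairPartition {s : Finset V} (hs : s.card = 2) :
    Multiset.card (pairPartition s) = Fintype.card V := by
  have h2 : 2 ≤ Fintype.card V := hs ▸ Finset.card_le_univ s
  simp only [pairPartition, singletonParts, Multiset.card_cons, Multiset.card_map]
  rw [← Finset.card_def, Finset.card_sdiff_of_subset s.subset_univ, hs, Finset.card_univ]
  omega

theorem eraseVtx_pairPartition {s : Finset V} {w : V} (hs : s.card = 2) (hw : w ∈ s) :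
    eraseVtx (pairPartition s) w = eraseVtx (singletonParts Finset.univ) w := by
  obtain ⟨u, hu⟩ : ∃ u, s.erase w = {u} := by
    rw [← Finset.card_eq_one, Finset.card_erase_of_mem hw, hs]
  have huw : u ∈ Finset.univ.erase w := Finset.mem_erase.mpr
    ⟨Finset.ne_of_mem_erase (hu ▸ Finset.mem_singleton_self u), Finset.mem_univ u⟩
  have hcompl : (Finset.univ.erase w).erase u = Finset.univ \ s := by
    ext a
    rw [← Finset.insert_erase hw, hu]
    simp only [Finset.mem_erase, Finset.mem_sdiff, Finset.mem_insert, Finset.mem_singleton,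
      Finset.mem_univ]
    tauto
  rw [eraseVtx_singletonParts (Finset.mem_univ w), singletonParts_eq_cons huw, hcompl,
    pairPartition, eraseVtx_cons, eraseVtx_cons, hu, Finset.erase_empty,
    eraseVtx_eq_self]
  simp only [singletonParts, Multiset.mem_map, Finset.mem_val]
  rintro _ ⟨a, ha, rfl⟩
  simpa using fun h : w = a => (Finset.mem_sdiff.mp ha).2 (h ▸ hw)

theorem mem_of_eraseVtx_pairPartition_eq {s t : Finset V} {w : V} (hs : s.card = 2)
    (ht : t.card = 2) (h : eraseVtx (pairPartition s) w = eraseVtx (pairPartition t) w) :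
    w ∈ s ∨ s = t := by
  refine or_iff_not_imp_left.mpr fun hws => ?_
  have hmem : s ∈ eraseVtx (pairPartition t) w :=
    h ▸ Multiset.mem_map.mpr ⟨s, mem_pairPartition_self s, Finset.erase_eq_of_notMem hws⟩
  obtain ⟨p, hp, rfl⟩ := Multiset.mem_map.mp hmem
  have hpt : p = t := eq_of_mem_pairPartition hp (hs ▸ Finset.card_erase_le)
  subst hpt
  exact Finset.eq_of_subset_of_card_le (Finset.erase_subset w p) (by omega)

theorem eq_pairPartition_of_eraseVtx_eq {P : Multiset (Finset V)} {v : V}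
    (hsum : (P.map Finset.val).sum = Finset.univ.val) (hne : P ≠ singletonParts Finset.univ)
    (h : eraseVtx P v = eraseVtx (singletonParts Finset.univ) v) :
    ∃ u, u ≠ v ∧ P = pairPartition {u, v} := by
  obtain ⟨t, ht, hP⟩ :=
    exists_eq_insert_cons_erase_eraseVtx (hsum ▸ Finset.univ.nodup) (hsum ▸ Finset.mem_univ_val v)
  rw [h, eraseVtx_singletonParts (Finset.mem_univ v)] at ht hP
  rcases Multiset.mem_cons.mp ht with rfl | ht
  · refine absurd ?_ hne
    rw [hP, Multiset.erase_cons_head, singletonParts_eq_cons (Finset.mem_univ v)]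
    rfl
  obtain ⟨u, hu, rfl⟩ := Multiset.mem_map.mp ht
  have hcompl : (Finset.univ.erase v).erase u = Finset.univ \ {u, v} := by
    ext a
    simp only [Finset.mem_erase, Finset.mem_sdiff, Finset.mem_insert, Finset.mem_singleton,
      Finset.mem_univ]
    tauto
  refine ⟨u, Finset.ne_of_mem_erase hu, ?_⟩
  rw [hP, singletonParts_eq_cons hu, Multiset.erase_cons_tail _ (Finset.singleton_ne_empty u).symm,
    Multiset.erase_cons_head, Multiset.cons_swap, hcompl, Finset.pair_comm]
  rfl

theorem pairPartition_ne_and_exists_eraseVtx_eq_iff {s t : Finset V} (hs : s.card = 2)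
    (ht : t.card = 2) :
    (pairPartition s ≠ pairPartition t ∧
        ∃ w, eraseVtx (pairPartition s) w = eraseVtx (pairPartition t) w) ↔
      s ≠ t ∧ ∃ w ∈ s, w ∈ t := by
  constructor
  · rintro ⟨hne, w, hw⟩
    have hst : s ≠ t := fun h => hne (congrArg pairPartition h)
    exact ⟨hst, w, (mem_of_eraseVtx_pairPartition_eq hs ht hw).resolve_right hst,
      (mem_of_eraseVtx_pairPartition_eq ht hs hw.symm).resolve_right hst.symm⟩
  · rintro ⟨hst, w, hws, hwt⟩
    exact ⟨fun h => hst (pairPartition_inj hs h), w,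
      (eraseVtx_pairPartition hs hws).trans (eraseVtx_pairPartition ht hwt).symm⟩

end PairPartition

section BellGraph

variable (G : SimpleGraph V)

theorem bellGraph_adj_iff {k : ℕ} {P Q : {P : Multiset (Finset V) // IsStablePartition G k P}} :
    (bellGraph G k).Adj P Q ↔ P.1 ≠ Q.1 ∧ ∃ v, eraseVtx P.1 v = eraseVtx Q.1 v :=
  and_congr_left' Subtype.ext_iff.not

def singletonPartition : {P : Multiset (Finset V) // IsStablePartition G (Fintype.card V) P} :=
  ⟨singletonParts Finset.univ, by
    refine ⟨Multiset.card_map _ _, ?_, ?_⟩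
    · simp only [singletonParts, Multiset.map_map, Function.comp_def, Finset.singleton_val,
        Multiset.sum_map_singleton]
    · simp only [singletonParts, Multiset.mem_map]
      rintro _ ⟨w, -, rfl⟩ a ha b hb
      rw [Finset.mem_singleton] at ha hb
      rw [ha, hb]
      exact G.loopless.irrefl w⟩

theorem isStablePartition_pairPartition {e : Sym2 V} (he : e ∈ Gᶜ.edgeSet) :
    IsStablePartition G (Fintype.card V) (pairPartition e.toFinset) := by
  refine ⟨card_pairPartition (card_toFinset_of_mem_edgeSet he), sum_pairPartition _, ?_⟩
  simp only [pairPartition, singletonParts, Multiset.mem_cons, Multiset.mem_map]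
  rintro p (rfl | rfl | ⟨w, -, rfl⟩) a ha b hb
  · simp at ha
  · rw [Sym2.mem_toFinset] at ha hb
    obtain rfl | hab := eq_or_ne a b
    · exact G.loopless.irrefl a
    · rw [(Sym2.mem_and_mem_iff hab).mp ⟨ha, hb⟩] at he
      exact ((compl_adj G a b).mp he).2
  · rw [Finset.mem_singleton] at ha hb
    rw [ha, hb]
    exact G.loopless.irrefl w

theorem singletonPartition_adj_pairPartition (e : Gᶜ.edgeSet) :
    (bellGraph G (Fintype.card V)).Adj (singletonPartition G)
      ⟨pairPartition e.1.toFinset, isStablePartition_pairPartition G e.2⟩ := by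
  have hcard := card_toFinset_of_mem_edgeSet e.2
  obtain ⟨w, hw⟩ := Finset.card_pos.mp (by omega : 0 < e.1.toFinset.card)
  exact ⟨fun h => pairPartition_ne_singletonParts _ (congrArg Subtype.val h).symm, w,
    (eraseVtx_pairPartition hcard hw).symm⟩

def pairNeighbor (e : Gᶜ.edgeSet) :
    (bellGraph G (Fintype.card V)).neighborSet (singletonPartition G) :=
  ⟨_, singletonPartition_adj_pairPartition G e⟩

theorem pairNeighbor_injective : Function.Injective (pairNeighbor G) := fun e₁ _ h =>
  Subtype.ext <| Sym2.toFinset_inj.mp <|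
    pairPartition_inj (card_toFinset_of_mem_edgeSet e₁.2) (congrArg (·.1.1) h)

theorem pairNeighbor_surjective : Function.Surjective (pairNeighbor G) := by
  rintro ⟨P, hne, v, hv⟩
  obtain ⟨u, huv, hP⟩ := eq_pairPartition_of_eraseVtx_eq P.2.2.1
    (fun h => hne (Subtype.ext h.symm)) hv.symm
  have hGuv : ¬G.Adj u v :=
    P.2.2.2 _ (hP ▸ mem_pairPartition_self _) u (by simp) v (by simp)
  refine ⟨⟨s(u, v), (compl_adj G u v).mpr ⟨huv, hGuv⟩⟩, Subtype.ext (Subtype.ext ?_)⟩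
  simp only [pairNeighbor, Sym2.toFinset_mk_eq, hP]

theorem pairNeighbor_adj_iff (e₁ e₂ : Gᶜ.edgeSet) :
    (bellGraph G (Fintype.card V)).Adj (pairNeighbor G e₁) (pairNeighbor G e₂) ↔
      Gᶜ.lineGraph.Adj e₁ e₂ := by
  have hne : e₁ ≠ e₂ ↔ e₁.1.toFinset ≠ e₂.1.toFinset :=
    (Subtype.ext_iff.trans Sym2.toFinset_inj.symm).not
  rw [bellGraph_adj_iff, lineGraph_adj_iff_exists, hne]
  simp only [pairNeighbor, ← Sym2.mem_toFinset]
  exact pairPartition_ne_and_exists_eraseVtx_eq_iff (card_toFinset_of_mem_edgeSet e₁.2)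
    (card_toFinset_of_mem_edgeSet e₂.2)

noncomputable def lineGraphIsoNeighborhood :
    Gᶜ.lineGraph ≃g (bellGraph G (Fintype.card V)).induce
      ((bellGraph G (Fintype.card V)).neighborSet (singletonPartition G)) where
  toEquiv := Equiv.ofBijective _ ⟨pairNeighbor_injective G, pairNeighbor_surjective G⟩
  map_rel_iff' := pairNeighbor_adj_iff G _ _

end BellGraph

/-- **The neighborhood of the singleton partition is a line graph.** Let `G`
have order `n` and let `Q` be the singleton stable `n`-partition (every part a
singleton).  Then the subgraph of `B_n(G)` induced on the neighborhood of `Q`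
is isomorphic to the line graph `L(Ḡ)` of the complement of `G`. -/
theorem neighborhood_of_singleton_is_lineGraph (G : SimpleGraph V) (n : ℕ)
    (hn : Fintype.card V = n)
    (Q : {P : Multiset (Finset V) // IsStablePartition G n P})
    (hQ : Q.1 = (Finset.univ : Finset V).val.map (fun v : V => ({v} : Finset V))) :
    Nonempty ((bellGraph G n).induce ((bellGraph G n).neighborSet Q) ≃g
      (Gᶜ).lineGraph) := by
  subst hn
  obtain rfl : Q = singletonPartition G := Subtype.ext hQ
  exact ⟨(lineGraphIsoNeighborhood G).symm⟩
end
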